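/- Let H be a cocommutative Hopf algebra over k. The unshuffle coproduct ∪ on the Connes–Moscovici Hochschild complex (H^{⊗•}, b) is a morphism of cochain complexes into the total tensor product complex: for all n, all p+q = n+1 and all x ∈ H^{⊗n}, ∪_{p,q}(b(x)) = (b⊗id)(∪_{p-1,q}(x)) + (−1)^p (id⊗b)(∪_{p,q-1}(x)). Consequently ∪ induces a well-defined coproduct ⊔: HHⁿ(H) → ⊕_{p+q=n} HH^p(H)⊗HH^q(H) on the Hochschild cohomology of the Connes–Moscovici complex. -/

import Mathlib

/-!
Regard `H^{⊗•}` as the tensor algebra on `H` placed in degree one. Prepending a factor `a` is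
multiplicative for the unshuffle coproduct, `∪ (a ⊗ x) = (a ⊗ 1 + 1 ⊗ a) · ∪ x` with the Koszul
sign: `∪ ∘ (a ⊗ -) = K (a ⊗ -) ∘ ∪`, where `K f = f ⊗ 1 + (-1)^p 1 ⊗ f` on bidegree `(p, q)`.
The differential is a graded derivation, `b (a ⊗ x) = δa ⊗ x - a ⊗ b x` with
`δa = 1 ⊗ a + a ⊗ 1 - Δa`. Peeling off the first factor, the induction step for `∪ ∘ b = K b ∘ ∪`
comes down to the anticommutator `K b ∘ K (a ⊗ -) + K (a ⊗ -) ∘ K b = K₂ (δa ⊗ -)`, where `K₂` is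
the sign-free extension of maps of degree two, and to `∪ (δa ⊗ x) = K₂ (δa ⊗ -) (∪ x)`. The latter
holds up to mixed terms depending on `δa - τ δa`, and these vanish because `Δ` is cocommutative.
-/

open TensorProduct

noncomputable section

namespace HopfCyclicStmt

variable (k : Type) [Field k]

/-! ### Iterated tensor powers and basic operations -/

section TP
variable (A : Type) [Ring A] [Algebra k A]

/-- Bundled iterated tensor powers of `A` over `k` (right-nested). -/
def TPobj : ℕ → ModuleCat k
  | 0 => ModuleCat.of k k
  | n + 1 => ModuleCat.of k (A ⊗[k] (TPobj n))

/-- `TP k A n` is the `n`-fold tensor power `A ⊗ ⋯ ⊗ A` of `A` over `k`,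
with `TP k A 0 = k` and `TP k A (n+1) = A ⊗ TP k A n`. -/
def TP (n : ℕ) : Type := TPobj k A n

instance (n : ℕ) : AddCommGroup (TP k A n) := inferInstanceAs (AddCommGroup (TPobj k A n))
instance (n : ℕ) : Module k (TP k A n) := inferInstanceAs (Module k (TPobj k A n))

/-- The pure tensor `h₁ ⊗ ⋯ ⊗ hₙ` as an element of `TP k A n`. -/
def tp : ∀ n, (Fin n → A) → TP k A n
  | 0, _ => (1 : k)
  | n + 1, f => f 0 ⊗ₜ[k] tp n (fun i => f i.succ)

/-- Transport along an equality of lengths. -/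
def castTP {m n : ℕ} (h : m = n) : TP k A m ≃ₗ[k] TP k A n :=
  h ▸ LinearEquiv.refl k (TP k A m)

/-- Multiply the `i`-th and `(i+1)`-st tensor factors (`0`-indexed). -/
def mulAt : ∀ (n : ℕ), Fin (n + 1) → (TP k A (n + 2) →ₗ[k] TP k A (n + 1))
  | n, ⟨0, _⟩ =>
      (LinearMap.rTensor (TP k A n) (LinearMap.mul' k A) :
          (A ⊗[k] A) ⊗[k] TP k A n →ₗ[k] A ⊗[k] TP k A n)
        ∘ₗ (TensorProduct.assoc k A A (TP k A n)).symm.toLinearMap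
  | n + 1, ⟨j + 1, h⟩ => LinearMap.lTensor A (mulAt n ⟨j, by omega⟩)
  | 0, ⟨j + 1, h⟩ => absurd h (by omega)

/-- Apply the counit `counitA` to the `i`-th tensor factor (`0`-indexed). -/
def dropAt (counitA : A →ₗ[k] k) : ∀ (n : ℕ), Fin (n + 1) → (TP k A (n + 1) →ₗ[k] TP k A n)
  | n, ⟨0, _⟩ =>
      (TensorProduct.lid k (TP k A n)).toLinearMap ∘ₗ LinearMap.rTensor (TP k A n) counitA
  | n + 1, ⟨j + 1, h⟩ => LinearMap.lTensor A (dropAt counitA n ⟨j, by omega⟩)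
  | 0, ⟨j + 1, h⟩ => absurd h (by omega)

/-- Apply the comultiplication `comulA` to the `i`-th tensor factor (`0`-indexed). -/
def comulAt (comulA : A →ₗ[k] A ⊗[k] A) : ∀ (n : ℕ), Fin n → (TP k A n →ₗ[k] TP k A (n + 1))
  | n + 1, ⟨0, _⟩ =>
      (TensorProduct.assoc k A A (TP k A n)).toLinearMap ∘ₗ LinearMap.rTensor (TP k A n) comulA
  | n + 2, ⟨j + 1, h⟩ => LinearMap.lTensor A (comulAt comulA (n + 1) ⟨j, by omega⟩)
  | 1, ⟨j + 1, h⟩ => absurd h (by omega)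
  | 0, i => absurd i.2 (by omega)

/-- Prepend a `1` in front: `x ↦ 1 ⊗ x`. -/
def cons1 (n : ℕ) : TP k A n →ₗ[k] TP k A (n + 1) := TensorProduct.mk k A (TP k A n) 1

/-- Append a tensor factor at the end. -/
def snoc : ∀ (n : ℕ), TP k A n ⊗[k] A →ₗ[k] TP k A (n + 1)
  | 0 => (TensorProduct.comm k k A).toLinearMap
  | n + 1 =>
      LinearMap.lTensor A (snoc n) ∘ₗ (TensorProduct.assoc k A (TP k A n) A).toLinearMap

/-- Append a `1` at the end: `x ↦ x ⊗ 1`. -/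
def snoc1 (n : ℕ) : TP k A n →ₗ[k] TP k A (n + 1) :=
  snoc k A n ∘ₗ (TensorProduct.mk k (TP k A n) A).flip 1

/-- Insert a `1` right after the `i`-th tensor factor. -/
def insertOneAt : ∀ (n : ℕ), Fin (n + 1) → (TP k A (n + 1) →ₗ[k] TP k A (n + 2))
  | n, ⟨0, _⟩ => LinearMap.lTensor A (cons1 k A n)
  | n + 1, ⟨j + 1, h⟩ => LinearMap.lTensor A (insertOneAt n ⟨j, by omega⟩)
  | 0, ⟨j + 1, h⟩ => absurd h (by omega)

/-- Pull the last tensor factor to the front. -/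
def lastSplit : ∀ (n : ℕ), TP k A (n + 1) →ₗ[k] A ⊗[k] TP k A n
  | 0 => LinearMap.id
  | n + 1 =>
      (TensorProduct.leftComm k A A (TP k A n)).toLinearMap
        ∘ₗ LinearMap.lTensor A (lastSplit n)

/-- Apply the counit to every factor. -/
def epsAll (counitA : A →ₗ[k] k) : ∀ (n : ℕ), TP k A n →ₗ[k] k
  | 0 => LinearMap.id
  | n + 1 =>
      (TensorProduct.lid k k).toLinearMap
        ∘ₗ TensorProduct.map counitA (epsAll counitA n)

/-- The diagonal (left) action of `A` on `TP k A (n+1)` with respect to the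
comultiplication `comulA`: `h · (h₀ ⊗ ⋯ ⊗ hₙ) = h⁽¹⁾h₀ ⊗ ⋯ ⊗ h⁽ⁿ⁺¹⁾hₙ`. -/
def diagTP (comulA : A →ₗ[k] A ⊗[k] A) : ∀ (n : ℕ), A ⊗[k] TP k A (n + 1) →ₗ[k] TP k A (n + 1)
  | 0 =>
      (LinearMap.rTensor k (LinearMap.mul' k A) : (A ⊗[k] A) ⊗[k] k →ₗ[k] A ⊗[k] k)
        ∘ₗ (TensorProduct.assoc k A A k).symm.toLinearMap
  | n + 1 =>
      TensorProduct.map (LinearMap.mul' k A) (diagTP comulA n)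
        ∘ₗ (TensorProduct.tensorTensorTensorComm k A A A (TP k A (n + 1))).toLinearMap
        ∘ₗ LinearMap.rTensor (A ⊗[k] TP k A (n + 1)) comulA

/-- The diagonal right coaction of `A` on `TP k A n`:
`h₀ ⊗ ⋯ ⊗ hₙ ↦ (h₀⁽¹⁾ ⊗ ⋯ ⊗ hₙ⁽¹⁾) ⊗ (h₀⁽²⁾ ⋯ hₙ⁽²⁾)`. -/
def codiagTP (comulA : A →ₗ[k] A ⊗[k] A) : ∀ (n : ℕ), TP k A n →ₗ[k] TP k A n ⊗[k] A
  | 0 => (TensorProduct.mk k (TP k A 0) A).flip 1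
  | n + 1 =>
      (LinearMap.lTensor (A ⊗[k] TP k A n) (LinearMap.mul' k A)
        ∘ₗ (TensorProduct.tensorTensorTensorComm k A A (TP k A n) A).toLinearMap
        ∘ₗ TensorProduct.map comulA (codiagTP comulA n) :
          TP k A (n + 1) →ₗ[k] (A ⊗[k] TP k A n) ⊗[k] A)

end TP

/-! ### Rearrangement of tensor powers of tensor products, and the diagonal -/

section Diag
variable (A B : Type) [Ring A] [Algebra k A] [Ring B] [Algebra k B]

/-- The rearrangement `(a₀⊗b₀) ⊗ ⋯ ⊗ (aₙ⊗bₙ) ↦ (a₀⊗⋯⊗aₙ) ⊗ (b₀⊗⋯⊗bₙ)`. -/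
def OmegaTP : ∀ (n : ℕ), TP k (A ⊗[k] B) n ≃ₗ[k] TP k A n ⊗[k] TP k B n
  | 0 => (TensorProduct.lid k k).symm
  | n + 1 =>
      (TensorProduct.congr (LinearEquiv.refl k (A ⊗[k] B)) (OmegaTP n)) ≪≫ₗ
        TensorProduct.tensorTensorTensorComm k A B (TP k A n) (TP k B n)

/-- Apply the comultiplication to every tensor factor:
`h₁ ⊗ ⋯ ⊗ hₙ ↦ (h₁⁽¹⁾⊗h₁⁽²⁾) ⊗ ⋯ ⊗ (hₙ⁽¹⁾⊗hₙ⁽²⁾)` in `TP k (A ⊗ A) n`. -/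
def TPdiag (comulA : A →ₗ[k] A ⊗[k] A) : ∀ (n : ℕ), TP k A n →ₗ[k] TP k (A ⊗[k] A) n
  | 0 => LinearMap.id
  | n + 1 => TensorProduct.map comulA (TPdiag comulA n)

end Diag

/-! ### Shuffles -/

section Shuffle
variable (A : Type) [Ring A] [Algebra k A]

/-- The subset of `Fin n` obtained from a subset of `Fin (n+1)` by removing `0`
and shifting down. -/
def tailSet {n : ℕ} (S : Finset (Fin (n + 1))) : Finset (Fin n) :=
  Finset.univ.filter (fun i : Fin n => i.succ ∈ S)

lemma tailSet_card_mem {n : ℕ} (S : Finset (Fin (n + 1))) (h : (0 : Fin (n + 1)) ∈ S) :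
    (tailSet S).card + 1 = S.card := by
  classical
  have h1 : S.card = ∑ x : Fin (n + 1), if x ∈ S then 1 else 0 := by
    rw [← Finset.card_filter]
    congr 1
    simp [Finset.filter_mem_eq_inter]
  rw [h1, Fin.sum_univ_succ, if_pos h]
  have h2 : (tailSet S).card = ∑ i : Fin n, if i.succ ∈ S then 1 else 0 := by
    rw [tailSet, Finset.card_filter]
  omega

lemma tailSet_card_not_mem {n : ℕ} (S : Finset (Fin (n + 1))) (h : (0 : Fin (n + 1)) ∉ S) :
    (tailSet S).card = S.card := by
  classical
  have h1 : S.card = ∑ x : Fin (n + 1), if x ∈ S then 1 else 0 := by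
    rw [← Finset.card_filter]
    congr 1
    simp [Finset.filter_mem_eq_inter]
  rw [h1, Fin.sum_univ_succ, if_neg h]
  have h2 : (tailSet S).card = ∑ i : Fin n, if i.succ ∈ S then 1 else 0 := by
    rw [tailSet, Finset.card_filter]
  omega

lemma tailSet_compl {n : ℕ} (S : Finset (Fin (n + 1))) :
    (tailSet S)ᶜ = tailSet Sᶜ := by
  classical
  ext i
  simp [tailSet]

lemma card_compl_eq {n p q : ℕ} (hpq : p + q = n) (S : Finset (Fin n)) (hS : S.card = p) :
    Sᶜ.card = q := by
  have h1 := Finset.card_compl S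
  have h2 := Finset.card_le_univ S
  simp only [Fintype.card_fin] at h1
  simp only [Finset.card_univ, Fintype.card_fin] at h2
  omega

/-- Split a tensor power according to a subset `S` of the positions: the factors in
positions belonging to `S` are collected (in order) into the first output, those in the
complementary positions into the second output. -/
def splitTP : ∀ (n : ℕ) (S : Finset (Fin n)), TP k A n →ₗ[k] TP k A S.card ⊗[k] TP k A Sᶜ.card
  | 0, S =>
      (TensorProduct.congr
          (castTP k A (show 0 = S.card by
            rw [Finset.eq_empty_of_isEmpty S, Finset.card_empty]))
          (castTP k A (show 0 = Sᶜ.card by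
            rw [Finset.eq_empty_of_isEmpty Sᶜ, Finset.card_empty]))).toLinearMap
        ∘ₗ (TensorProduct.lid k (TP k A 0)).symm.toLinearMap
  | n + 1, S =>
      if h0 : (0 : Fin (n + 1)) ∈ S then
        (TensorProduct.congr
            (castTP k A (by simpa using tailSet_card_mem S h0) :
                TP k A ((tailSet S).card + 1) ≃ₗ[k] TP k A S.card)
            (castTP k A (by
              rw [tailSet_compl]
              exact tailSet_card_not_mem Sᶜ (by simpa using h0)))).toLinearMap
          ∘ₗ (TensorProduct.assoc k A (TP k A (tailSet S).card)
                (TP k A (tailSet S)ᶜ.card)).symm.toLinearMap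
          ∘ₗ LinearMap.lTensor A (splitTP n (tailSet S))
      else
        (TensorProduct.congr
            (castTP k A (tailSet_card_not_mem S h0))
            (castTP k A (by
              rw [tailSet_compl]
              simpa using tailSet_card_mem Sᶜ (by simpa using h0)) :
                TP k A ((tailSet S)ᶜ.card + 1) ≃ₗ[k] TP k A Sᶜ.card)).toLinearMap
          ∘ₗ ((TensorProduct.leftComm k A (TP k A (tailSet S).card)
                (TP k A (tailSet S)ᶜ.card)).toLinearMap :
                A ⊗[k] (TP k A (tailSet S).card ⊗[k] TP k A (tailSet S)ᶜ.card) →ₗ[k]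
                  TP k A (tailSet S).card ⊗[k] (A ⊗[k] TP k A (tailSet S)ᶜ.card))
          ∘ₗ LinearMap.lTensor A (splitTP n (tailSet S))

/-- The sign of the `(p,q)`-shuffle associated to a subset `S ⊆ {0,…,n−1}` of
cardinality `p` (the shuffle placing the positions in `S` first, in order): the parity
of the number of pairs `(a, b) ∈ S × Sᶜ` with `b < a`. -/
def shuffleSign {n : ℕ} (S : Finset (Fin n)) : ℤ :=
  (-1) ^ (∑ a ∈ S, (Sᶜ.filter (· < a)).card)

/-- Keep the tensor factors in positions belonging to `S` (in order) and apply the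
counit to all the other factors. -/
def keepTP (counitA : A →ₗ[k] k) (n : ℕ) (S : Finset (Fin n)) :
    TP k A n →ₗ[k] TP k A S.card :=
  (TensorProduct.rid k (TP k A S.card)).toLinearMap
    ∘ₗ LinearMap.lTensor (TP k A S.card) (epsAll k A counitA Sᶜ.card)
    ∘ₗ splitTP k A n S

/-- The component `∪_{p,q} : A^{⊗n} → A^{⊗p} ⊗ A^{⊗q}` of the unshuffle coproduct:
`∪_{p,q}(h₁⊗⋯⊗hₙ) = Σ_σ sign(σ) (h_{σ(1)}⊗⋯⊗h_{σ(p)}) ⊗ (h_{σ(p+1)}⊗⋯⊗h_{σ(n)})`,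
where `σ` runs over all `(p,q)`-shuffles. -/
def cupTP (n p q : ℕ) (hpq : p + q = n) : TP k A n →ₗ[k] TP k A p ⊗[k] TP k A q :=
  ∑ S : {S : Finset (Fin n) // S.card = p},
    shuffleSign S.1 •
      ((TensorProduct.congr (castTP k A S.2)
          (castTP k A (card_compl_eq hpq S.1 S.2))).toLinearMap
        ∘ₗ splitTP k A n S.1)

/-- The shuffle map `sh_{p,q} : A^{⊗n} ⊗ A^{⊗n} → A^{⊗p} ⊗ A^{⊗q}` (for `p + q = n`):
the signed sum over all `(p,q)`-shuffles `σ` of the map applying the counit to the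
factors in positions `σ(p+1),…,σ(n)` of the first copy and in positions `σ(1),…,σ(p)`
of the second copy. -/
def shTP (counitA : A →ₗ[k] k) (n p q : ℕ) (hpq : p + q = n) :
    TP k A n ⊗[k] TP k A n →ₗ[k] TP k A p ⊗[k] TP k A q :=
  ∑ S : {S : Finset (Fin n) // S.card = p},
    shuffleSign S.1 •
      TensorProduct.map
        ((castTP k A S.2).toLinearMap ∘ₗ keepTP k A counitA n S.1)
        ((castTP k A (card_compl_eq hpq S.1 S.2)).toLinearMap ∘ₗ keepTP k A counitA n S.1ᶜ)

end Shuffle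

/-! ### The Connes–Moscovici style cocyclic module `C^n(H, M) = M ⊗_H H^{⊗(n+1)}` -/

section CMcochain
variable (A M : Type) [Ring A] [Algebra k A] [AddCommGroup M] [Module k M]

/-- The coface maps of the cocyclic module `C(H,M)` at the level of
`M ⊗ H^{⊗(n+1)}`: for `i ≤ n` the comultiplication is applied to the `i`-th factor,
and for `i = n+1` we take the flip-over coface
`m ⊗ h₀ ⊗ ⋯ ⊗ hₙ ↦ m⁽⁰⁾ ⊗ h₀⁽²⁾ ⊗ h₁ ⊗ ⋯ ⊗ hₙ ⊗ m⁽⁻¹⁾h₀⁽¹⁾`. -/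
def cofaceCM (comulA : A →ₗ[k] A ⊗[k] A) (coact : M →ₗ[k] A ⊗[k] M) (n : ℕ)
    (i : Fin (n + 2)) : M ⊗[k] TP k A (n + 1) →ₗ[k] M ⊗[k] TP k A (n + 2) :=
  if h : i.val ≤ n then
    LinearMap.lTensor M (comulAt k A comulA (n + 1) ⟨i.val, by omega⟩)
  else
    LinearMap.lTensor M
        (snoc k A (n + 1) ∘ₗ (TensorProduct.comm k A (TP k A (n + 1))).toLinearMap)
      ∘ₗ (TensorProduct.leftComm k A M (TP k A (n + 1))).toLinearMap
      ∘ₗ LinearMap.rTensor (M ⊗[k] TP k A (n + 1)) (LinearMap.mul' k A)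
      ∘ₗ (TensorProduct.tensorTensorTensorComm k A M A (TP k A (n + 1))).toLinearMap
      ∘ₗ (LinearMap.rTensor (TP k A (n + 2)) coact :
          M ⊗[k] TP k A (n + 2) →ₗ[k] (A ⊗[k] M) ⊗[k] (A ⊗[k] TP k A (n + 1)))
      ∘ₗ LinearMap.lTensor M (comulAt k A comulA (n + 1) ⟨0, by omega⟩)

/-- The codegeneracy maps of the cocyclic module `C(H,M)` at the level of
`M ⊗ H^{⊗(n+2)}`: `σᵢ` applies the counit to the `(i+1)`-st factor. -/
def codegenCM (counitA : A →ₗ[k] k) (n : ℕ) (i : Fin (n + 1)) :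
    M ⊗[k] TP k A (n + 2) →ₗ[k] M ⊗[k] TP k A (n + 1) :=
  LinearMap.lTensor M (dropAt k A counitA (n + 1) ⟨i.val + 1, by omega⟩)

/-- The cocyclic operator of `C(H,M)` at the level of `M ⊗ H^{⊗(n+1)}`:
`τₙ(m ⊗ h₀ ⊗ ⋯ ⊗ hₙ) = m⁽⁰⁾ ⊗ h₁ ⊗ ⋯ ⊗ hₙ ⊗ m⁽⁻¹⁾h₀`. -/
def tauCM (coact : M →ₗ[k] A ⊗[k] M) (n : ℕ) :
    M ⊗[k] TP k A (n + 1) →ₗ[k] M ⊗[k] TP k A (n + 1) :=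
  LinearMap.lTensor M (snoc k A n ∘ₗ (TensorProduct.comm k A (TP k A n)).toLinearMap)
    ∘ₗ (TensorProduct.leftComm k A M (TP k A n)).toLinearMap
    ∘ₗ LinearMap.rTensor (M ⊗[k] TP k A n) (LinearMap.mul' k A)
    ∘ₗ (TensorProduct.tensorTensorTensorComm k A M A (TP k A n)).toLinearMap
    ∘ₗ LinearMap.rTensor (TP k A (n + 1)) coact

/-- The relators defining `C^n(H, M) = M ⊗_H H^{⊗(n+1)}` as a quotient of
`M ⊗ H^{⊗(n+1)}`: the span of all `m·h ⊗ t − m ⊗ h·t`, where `h` acts diagonally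
(through the comultiplication) on `t ∈ H^{⊗(n+1)}`. -/
def cmRel (comulA : A →ₗ[k] A ⊗[k] A) (act : M →ₗ[k] A →ₗ[k] M) (n : ℕ) :
    Submodule k (M ⊗[k] TP k A (n + 1)) :=
  Submodule.span k {x | ∃ (m : M) (h : A) (t : TP k A (n + 1)),
    x = act m h ⊗ₜ[k] t - m ⊗ₜ[k] diagTP k A comulA n (h ⊗ₜ[k] t)}

/-- The Hopf-cyclic cochain space `C^n(H, M) = M ⊗_H H^{⊗(n+1)}`. -/
def CM (comulA : A →ₗ[k] A ⊗[k] A) (act : M →ₗ[k] A →ₗ[k] M) (n : ℕ) : Type :=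
  (M ⊗[k] TP k A (n + 1)) ⧸ cmRel k A M comulA act n

instance (comulA : A →ₗ[k] A ⊗[k] A) (act : M →ₗ[k] A →ₗ[k] M) (n : ℕ) :
    AddCommGroup (CM k A M comulA act n) :=
  inferInstanceAs (AddCommGroup ((M ⊗[k] TP k A (n + 1)) ⧸ cmRel k A M comulA act n))

instance (comulA : A →ₗ[k] A ⊗[k] A) (act : M →ₗ[k] A →ₗ[k] M) (n : ℕ) :
    Module k (CM k A M comulA act n) :=
  inferInstanceAs (Module k ((M ⊗[k] TP k A (n + 1)) ⧸ cmRel k A M comulA act n))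

/-- The canonical projection `M ⊗ H^{⊗(n+1)} → C^n(H,M)`. -/
def cmMk (comulA : A →ₗ[k] A ⊗[k] A) (act : M →ₗ[k] A →ₗ[k] M) (n : ℕ) :
    M ⊗[k] TP k A (n + 1) →ₗ[k] CM k A M comulA act n :=
  (cmRel k A M comulA act n).mkQ

end CMcochain

/-! ### The cyclic module `C̃ₙ(H,M)` (Hopf-cyclic homology) -/

section CyChain
variable (A M : Type) [Ring A] [Algebra k A] [AddCommGroup M] [Module k M]

/-- The cyclic operator `τₙ(h₀ ⊗ ⋯ ⊗ hₙ ⊗ m) = hₙ⁽¹⁾ ⊗ h₀ ⊗ ⋯ ⊗ h_{n-1} ⊗ hₙ⁽²⁾·m`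
at the level of `H^{⊗(n+1)} ⊗ M`. -/
def tauCy (comulA : A →ₗ[k] A ⊗[k] A) (act : A →ₗ[k] M →ₗ[k] M) (n : ℕ) :
    TP k A (n + 1) ⊗[k] M →ₗ[k] TP k A (n + 1) ⊗[k] M :=
  TensorProduct.map LinearMap.id (TensorProduct.lift act)
    ∘ₗ (TensorProduct.tensorTensorTensorComm k A A (TP k A n) M).toLinearMap
    ∘ₗ (TensorProduct.assoc k (A ⊗[k] A) (TP k A n) M).toLinearMap
    ∘ₗ LinearMap.rTensor M (LinearMap.rTensor (TP k A n) comulA)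
    ∘ₗ LinearMap.rTensor M (lastSplit k A n)

/-- The face maps of `C̃(H,M)` at the level of `H^{⊗(n+2)} ⊗ M`: for `i ≤ n`,
`δᵢ` multiplies the `i`-th and `(i+1)`-st factors; the last face is
`δ_{n+1}(h₀ ⊗ ⋯ ⊗ h_{n+1} ⊗ m) = h_{n+1}⁽¹⁾h₀ ⊗ h₁ ⊗ ⋯ ⊗ hₙ ⊗ h_{n+1}⁽²⁾·m`. -/
def faceCy (comulA : A →ₗ[k] A ⊗[k] A) (act : A →ₗ[k] M →ₗ[k] M) (n : ℕ)
    (i : Fin (n + 2)) : TP k A (n + 2) ⊗[k] M →ₗ[k] TP k A (n + 1) ⊗[k] M :=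
  if h : i.val ≤ n then
    LinearMap.rTensor M (mulAt k A n ⟨i.val, by omega⟩)
  else
    LinearMap.rTensor M (mulAt k A n ⟨0, by omega⟩)
      ∘ₗ tauCy k A M comulA act (n + 1)

/-- The degeneracy maps of `C̃(H,M)` at the level of `H^{⊗(n+1)} ⊗ M`: `σᵢ` inserts a
`1` after the `i`-th tensor factor. -/
def degenCy (n : ℕ) (i : Fin (n + 1)) :
    TP k A (n + 1) ⊗[k] M →ₗ[k] TP k A (n + 2) ⊗[k] M :=
  LinearMap.rTensor M (insertOneAt k A n i)

/-- The map whose kernel is the cotensor product `H^{⊗(n+1)} □_H M`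
(diagonal right coaction on `H^{⊗(n+1)}`, left coaction `coact` on `M`). -/
def cotensorMapCy (comulA : A →ₗ[k] A ⊗[k] A) (coact : M →ₗ[k] A ⊗[k] M) (n : ℕ) :
    TP k A (n + 1) ⊗[k] M →ₗ[k] TP k A (n + 1) ⊗[k] (A ⊗[k] M) :=
  (TensorProduct.assoc k (TP k A (n + 1)) A M).toLinearMap
      ∘ₗ LinearMap.rTensor M (codiagTP k A comulA (n + 1))
    - LinearMap.lTensor (TP k A (n + 1)) coact

/-- The cotensor product `C̃ₙ(H,M) = H^{⊗(n+1)} □_H M`, as a submodule of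
`H^{⊗(n+1)} ⊗ M`. -/
def cotensorCy (comulA : A →ₗ[k] A ⊗[k] A) (coact : M →ₗ[k] A ⊗[k] M) (n : ℕ) :
    Submodule k (TP k A (n + 1) ⊗[k] M) :=
  LinearMap.ker (cotensorMapCy k A M comulA coact n)

end CyChain

/-! ### (Stable) anti-Yetter–Drinfeld conditions -/

section AYD

variable (A M : Type) [Ring A] [Algebra k A] [AddCommGroup M] [Module k M]

/-- `M` is a right `A`-module via the bilinear map `act`. -/
def IsRightAction (act : M →ₗ[k] A →ₗ[k] M) : Prop :=
  (∀ m : M, act m 1 = m) ∧ ∀ (m : M) (a b : A), act (act m a) b = act m (a * b)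

/-- `M` is a left `A`-module via the bilinear map `act`. -/
def IsLeftAction (act : A →ₗ[k] M →ₗ[k] M) : Prop :=
  (∀ m : M, act 1 m = m) ∧ ∀ (a b : A) (m : M), act a (act b m) = act (a * b) m

/-- `coact` makes `M` a left `A`-comodule, with respect to the comultiplication `comulA`
and counit `counitA`. -/
def IsLeftCoaction (comulA : A →ₗ[k] A ⊗[k] A) (counitA : A →ₗ[k] k)
    (coact : M →ₗ[k] A ⊗[k] M) : Prop :=
  (LinearMap.rTensor M comulA ∘ₗ coact
      = (TensorProduct.assoc k A A M).symm.toLinearMap ∘ₗ LinearMap.lTensor A coact ∘ₗ coact)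
  ∧ ∀ m : M, (TensorProduct.lid k M) (LinearMap.rTensor M counitA (coact m)) = m

/-- The iterated comultiplication `h ↦ h⁽¹⁾ ⊗ (h⁽²⁾ ⊗ h⁽³⁾)`. -/
def comul₂ (comulA : A →ₗ[k] A ⊗[k] A) : A →ₗ[k] A ⊗[k] (A ⊗[k] A) :=
  LinearMap.lTensor A comulA ∘ₗ comulA

/-- The linear map `(a ⊗ m) ⊗ (h₁ ⊗ (h₂ ⊗ h₃)) ↦ (S(h₃) * a * h₁) ⊗ (m · h₂)`,
the right-hand side of the (right-module, left-comodule) anti-Yetter–Drinfeld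
condition. -/
def aydRHS (antipodeA : A →ₗ[k] A) (act : M →ₗ[k] A →ₗ[k] M) :
    (A ⊗[k] M) ⊗[k] (A ⊗[k] (A ⊗[k] A)) →ₗ[k] A ⊗[k] M :=
  TensorProduct.map (LinearMap.mul' k A ∘ₗ LinearMap.lTensor A (LinearMap.mul' k A))
      (TensorProduct.lift act)
    ∘ₗ (TensorProduct.assoc k A (A ⊗[k] A) (M ⊗[k] A)).symm.toLinearMap
    ∘ₗ (TensorProduct.leftComm k (A ⊗[k] A) A (M ⊗[k] A)).toLinearMap
    ∘ₗ LinearMap.lTensor (A ⊗[k] A)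
        ((TensorProduct.leftComm k M A A).toLinearMap
          ∘ₗ LinearMap.lTensor M (TensorProduct.comm k A A).toLinearMap)
    ∘ₗ (TensorProduct.tensorTensorTensorComm k A M A (A ⊗[k] A)).toLinearMap
    ∘ₗ LinearMap.lTensor (A ⊗[k] M) (LinearMap.lTensor A (LinearMap.lTensor A antipodeA))

/-- The anti-Yetter–Drinfeld compatibility condition
`φ(m·h) = S(h⁽³⁾) m⁽⁻¹⁾ h⁽¹⁾ ⊗ m⁽⁰⁾·h⁽²⁾`, written without Sweedler notation. -/
def IsAYD (comulA : A →ₗ[k] A ⊗[k] A) (antipodeA : A →ₗ[k] A)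
    (act : M →ₗ[k] A →ₗ[k] M) (coact : M →ₗ[k] A ⊗[k] M) : Prop :=
  ∀ (m : M) (h : A),
    coact (act m h) = aydRHS k A M antipodeA act (coact m ⊗ₜ[k] comul₂ k A comulA h)

/-- The stability condition `m⁽⁰⁾ · m⁽⁻¹⁾ = m` for a right module, left comodule. -/
def IsStable (act : M →ₗ[k] A →ₗ[k] M) (coact : M →ₗ[k] A ⊗[k] M) : Prop :=
  ∀ m : M, TensorProduct.lift act (TensorProduct.comm k A M (coact m)) = m

/-- The linear map `(h₁ ⊗ (h₂ ⊗ h₃)) ⊗ (a ⊗ m) ↦ (h₁ * a * S(h₃)) ⊗ (h₂ · m)`,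
the right-hand side of the left-left anti-Yetter–Drinfeld condition. -/
def llAydRHS (antipodeA : A →ₗ[k] A) (act : A →ₗ[k] M →ₗ[k] M) :
    (A ⊗[k] (A ⊗[k] A)) ⊗[k] (A ⊗[k] M) →ₗ[k] A ⊗[k] M :=
  TensorProduct.map (LinearMap.mul' k A) (TensorProduct.lift act)
    ∘ₗ (TensorProduct.tensorTensorTensorComm k A A A M).toLinearMap
    ∘ₗ LinearMap.rTensor (A ⊗[k] M)
        ((TensorProduct.comm k A A).toLinearMap
          ∘ₗ LinearMap.lTensor A (LinearMap.mul' k A)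
          ∘ₗ (TensorProduct.assoc k A A A).toLinearMap
          ∘ₗ LinearMap.rTensor A (TensorProduct.comm k A A).toLinearMap)
    ∘ₗ (TensorProduct.tensorTensorTensorComm k (A ⊗[k] A) A A M).toLinearMap
    ∘ₗ LinearMap.rTensor (A ⊗[k] M) (TensorProduct.assoc k A A A).symm.toLinearMap
    ∘ₗ LinearMap.rTensor (A ⊗[k] M) (LinearMap.lTensor A (LinearMap.lTensor A antipodeA))

/-- The left-left anti-Yetter–Drinfeld condition
`φ(h·m) = h⁽¹⁾ m⁽⁻¹⁾ S(h⁽³⁾) ⊗ h⁽²⁾·m⁽⁰⁾`. -/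
def IsLLAYD (comulA : A →ₗ[k] A ⊗[k] A) (antipodeA : A →ₗ[k] A)
    (act : A →ₗ[k] M →ₗ[k] M) (coact : M →ₗ[k] A ⊗[k] M) : Prop :=
  ∀ (h : A) (m : M),
    coact (act h m) = llAydRHS k A M antipodeA act (comul₂ k A comulA h ⊗ₜ[k] coact m)

/-- The stability condition `m⁽⁻¹⁾ · m⁽⁰⁾ = m` for a left module, left comodule. -/
def IsLLStable (act : A →ₗ[k] M →ₗ[k] M) (coact : M →ₗ[k] A ⊗[k] M) : Prop :=
  ∀ m : M, TensorProduct.lift act (coact m) = m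

end AYD

/-! ### Tensor products of (co)module structures -/

section TensorStructures

variable (A B M N : Type) [Ring A] [Algebra k A] [Ring B] [Algebra k B]
variable [AddCommGroup M] [Module k M] [AddCommGroup N] [Module k N]

/-- The componentwise right action of `A ⊗ B` on `M ⊗ N`. -/
def tensorAct (actM : M →ₗ[k] A →ₗ[k] M) (actN : N →ₗ[k] B →ₗ[k] N) :
    M ⊗[k] N →ₗ[k] (A ⊗[k] B) →ₗ[k] M ⊗[k] N :=
  TensorProduct.curry
    (TensorProduct.map (TensorProduct.lift actM) (TensorProduct.lift actN)
      ∘ₗ (TensorProduct.tensorTensorTensorComm k M N A B).toLinearMap)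

/-- The componentwise left action of `A ⊗ B` on `M ⊗ N`. -/
def tensorLAct (actM : A →ₗ[k] M →ₗ[k] M) (actN : B →ₗ[k] N →ₗ[k] N) :
    (A ⊗[k] B) →ₗ[k] M ⊗[k] N →ₗ[k] M ⊗[k] N :=
  TensorProduct.curry
    (TensorProduct.map (TensorProduct.lift actM) (TensorProduct.lift actN)
      ∘ₗ (TensorProduct.tensorTensorTensorComm k A B M N).toLinearMap)

/-- The coaction `m ⊗ n ↦ (m⁽⁻¹⁾ ⊗ n⁽⁻¹⁾) ⊗ (m⁽⁰⁾ ⊗ n⁽⁰⁾)` of `A ⊗ B` on `M ⊗ N`. -/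
def tensorCoact (coactM : M →ₗ[k] A ⊗[k] M) (coactN : N →ₗ[k] B ⊗[k] N) :
    M ⊗[k] N →ₗ[k] (A ⊗[k] B) ⊗[k] (M ⊗[k] N) :=
  (TensorProduct.tensorTensorTensorComm k A M B N).toLinearMap
    ∘ₗ TensorProduct.map coactM coactN

/-- The comultiplication `(a ⊗ b) ↦ (a⁽¹⁾ ⊗ b⁽¹⁾) ⊗ (a⁽²⁾ ⊗ b⁽²⁾)` of a tensor product. -/
def tensorComul (comulA : A →ₗ[k] A ⊗[k] A) (comulB : B →ₗ[k] B ⊗[k] B) :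
    (A ⊗[k] B) →ₗ[k] (A ⊗[k] B) ⊗[k] (A ⊗[k] B) :=
  (TensorProduct.tensorTensorTensorComm k A A B B).toLinearMap
    ∘ₗ TensorProduct.map comulA comulB

/-- The antipode `S ⊗ S` of a tensor product. -/
def tensorAntipode (antipodeA : A →ₗ[k] A) (antipodeB : B →ₗ[k] B) :
    (A ⊗[k] B) →ₗ[k] A ⊗[k] B :=
  TensorProduct.map antipodeA antipodeB

/-- The rearrangement
`(m ⊗ n) ⊗ ((a₀⊗b₀) ⊗ ⋯ ⊗ (aₙ⊗bₙ)) ↦ (m ⊗ a₀⊗⋯⊗aₙ) ⊗ (n ⊗ b₀⊗⋯⊗bₙ)`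
identifying the underlying space of `C^n(A ⊗ B, M ⊗ N)` with the tensor product of
those of `C^n(A, M)` and `C^n(B, N)`. -/
def OmegaCM (n : ℕ) :
    (M ⊗[k] N) ⊗[k] TP k (A ⊗[k] B) (n + 1) ≃ₗ[k]
      (M ⊗[k] TP k A (n + 1)) ⊗[k] (N ⊗[k] TP k B (n + 1)) :=
  TensorProduct.congr (LinearEquiv.refl k (M ⊗[k] N)) (OmegaTP k A B (n + 1)) ≪≫ₗ
    TensorProduct.tensorTensorTensorComm k M N (TP k A (n + 1)) (TP k B (n + 1))

/-- The rearrangement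
`((a₀⊗b₀) ⊗ ⋯ ⊗ (aₙ⊗bₙ)) ⊗ (m ⊗ n) ↦ (a₀⊗⋯⊗aₙ ⊗ m) ⊗ (b₀⊗⋯⊗bₙ ⊗ n)`
identifying the underlying space of `C̃ₙ(A ⊗ B, M ⊗ N)` with the tensor product of
those of `C̃ₙ(A, M)` and `C̃ₙ(B, N)`. -/
def OmegaCy (n : ℕ) :
    TP k (A ⊗[k] B) (n + 1) ⊗[k] (M ⊗[k] N) ≃ₗ[k]
      (TP k A (n + 1) ⊗[k] M) ⊗[k] (TP k B (n + 1) ⊗[k] N) :=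
  TensorProduct.congr (OmegaTP k A B (n + 1)) (LinearEquiv.refl k (M ⊗[k] N)) ≪≫ₗ
    TensorProduct.tensorTensorTensorComm k (TP k A (n + 1)) (TP k B (n + 1)) M N

end TensorStructures

section ShuffleRecursion

variable {n : ℕ}

lemma zero_notMem_image_succ (T : Finset (Fin n)) : (0 : Fin (n + 1)) ∉ T.image Fin.succ := by
  simp [Fin.succ_ne_zero]

lemma card_image_succ (T : Finset (Fin n)) : (T.image Fin.succ).card = T.card :=
  Finset.card_image_of_injective _ (Fin.succ_injective n)

lemma tailSet_image_succ (T : Finset (Fin n)) : tailSet (T.image Fin.succ) = T := by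
  ext i
  simp [tailSet]

lemma tailSet_insert_zero (T : Finset (Fin n)) : tailSet (insert 0 (T.image Fin.succ)) = T := by
  ext i
  simp [tailSet]

lemma image_succ_tailSet {S : Finset (Fin (n + 1))} (h : (0 : Fin (n + 1)) ∉ S) :
    (tailSet S).image Fin.succ = S := by
  ext j
  cases j using Fin.cases <;> simp [tailSet, h, Fin.succ_ne_zero]

lemma insert_zero_image_succ_tailSet {S : Finset (Fin (n + 1))} (h : (0 : Fin (n + 1)) ∈ S) :
    insert 0 ((tailSet S).image Fin.succ) = S := by
  ext j
  cases j using Fin.cases <;> simp [tailSet, h, Fin.succ_ne_zero]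

lemma card_compl_tailSet_of_zero_mem {S : Finset (Fin (n + 1))} (h : (0 : Fin (n + 1)) ∈ S) :
    (tailSet S)ᶜ.card = Sᶜ.card := by
  rw [tailSet_compl]
  exact tailSet_card_not_mem Sᶜ (by simpa using h)

lemma card_compl_tailSet_of_zero_notMem {S : Finset (Fin (n + 1))} (h : (0 : Fin (n + 1)) ∉ S) :
    (tailSet S)ᶜ.card + 1 = Sᶜ.card := by
  rw [tailSet_compl]
  exact tailSet_card_mem Sᶜ (by simpa using h)

lemma card_filter_compl_lt_succ (S : Finset (Fin (n + 1))) (i : Fin n) :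
    (Sᶜ.filter (· < i.succ)).card
      = ((tailSet S)ᶜ.filter (· < i)).card + if (0 : Fin (n + 1)) ∈ S then 0 else 1 := by
  have hsplit : Sᶜ.filter (· < i.succ)
      = (if (0 : Fin (n + 1)) ∈ S then ∅ else {0})
        ∪ ((tailSet S)ᶜ.filter (· < i)).image Fin.succ := by
    ext j
    cases j using Fin.cases <;> by_cases h0 : (0 : Fin (n + 1)) ∈ S <;>
      simp [h0, tailSet, Fin.succ_pos, Fin.succ_ne_zero, and_comm]
  rw [hsplit, Finset.card_union_of_disjoint, card_image_succ]
  · by_cases h0 : (0 : Fin (n + 1)) ∈ S <;> simp [h0, add_comm]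
  · by_cases h0 : (0 : Fin (n + 1)) ∈ S <;> simp [h0, Fin.succ_ne_zero]

lemma shuffleSign_of_zero_mem {S : Finset (Fin (n + 1))} (h : (0 : Fin (n + 1)) ∈ S) :
    shuffleSign S = shuffleSign (tailSet S) := by
  unfold shuffleSign
  congr 1
  rw [← insert_zero_image_succ_tailSet h, Finset.sum_insert (zero_notMem_image_succ _),
    Finset.sum_image fun a _ b _ hab => Fin.succ_injective n hab, tailSet_insert_zero]
  simp only [insert_zero_image_succ_tailSet h, card_filter_compl_lt_succ, if_pos h, add_zero]
  simp

-- The first factor moves to the second leg past the `S.card` factors of the first leg.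
lemma shuffleSign_of_zero_notMem {S : Finset (Fin (n + 1))} (h : (0 : Fin (n + 1)) ∉ S) :
    shuffleSign S = (-1 : ℤ) ^ S.card * shuffleSign (tailSet S) := by
  unfold shuffleSign
  rw [← pow_add]
  congr 1
  rw [Finset.sum_congr (image_succ_tailSet h).symm fun _ _ => rfl,
    Finset.sum_image fun a _ b _ hab => Fin.succ_injective n hab]
  simp only [card_filter_compl_lt_succ S, if_neg h, Finset.sum_add_distrib, Finset.sum_const,
    smul_eq_mul, mul_one, tailSet_card_not_mem S h]
  ring

def zeroMemEquiv (n p : ℕ) :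
    {S : {S : Finset (Fin (n + 1)) // S.card = p + 1} // (0 : Fin (n + 1)) ∈ S.1} ≃
      {T : Finset (Fin n) // T.card = p} where
  toFun S := ⟨tailSet S.1.1, by have := tailSet_card_mem S.1.1 S.2; have := S.1.2; omega⟩
  invFun T := ⟨⟨insert 0 (T.1.image Fin.succ), by
      rw [Finset.card_insert_of_notMem (zero_notMem_image_succ _), card_image_succ, T.2]⟩,
    Finset.mem_insert_self _ _⟩
  left_inv S := Subtype.ext <| Subtype.ext <| insert_zero_image_succ_tailSet S.2
  right_inv T := Subtype.ext <| tailSet_insert_zero _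

def zeroNotMemEquiv (n p : ℕ) :
    {S : {S : Finset (Fin (n + 1)) // S.card = p} // (0 : Fin (n + 1)) ∉ S.1} ≃
      {T : Finset (Fin n) // T.card = p} where
  toFun S := ⟨tailSet S.1.1, by rw [tailSet_card_not_mem S.1.1 S.2, S.1.2]⟩
  invFun T := ⟨⟨T.1.image Fin.succ, by rw [card_image_succ, T.2]⟩, zero_notMem_image_succ _⟩
  left_inv S := Subtype.ext <| Subtype.ext <| image_succ_tailSet S.2
  right_inv T := Subtype.ext <| tailSet_image_succ _

end ShuffleRecursion

section PrependFactor

variable (A : Type) [Ring A] [Algebra k A]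

def mkT (n : ℕ) (a : A) : TP k A n →ₗ[k] TP k A (n + 1) :=
  TensorProduct.mk k A (TP k A n) a

def cupSummand {n p q : ℕ} (h : p + q = n) (S : {S : Finset (Fin n) // S.card = p}) :
    TP k A n →ₗ[k] TP k A p ⊗[k] TP k A q :=
  shuffleSign S.1 •
    ((TensorProduct.congr (castTP k A S.2) (castTP k A (card_compl_eq h S.1 S.2))).toLinearMap
      ∘ₗ splitTP k A n S.1)

variable {k A}

lemma TP.hom_ext_mkT {n : ℕ} {C : Type} [AddCommGroup C] [Module k C]
    {F G : TP k A (n + 1) →ₗ[k] C} (h : ∀ a : A, F ∘ₗ mkT k A n a = G ∘ₗ mkT k A n a) : F = G :=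
  TensorProduct.ext' fun a x => LinearMap.congr_fun (h a) x

lemma leftComm_comp_lTensor_comp_mk {M L R : Type} [AddCommGroup M] [Module k M]
    [AddCommGroup L] [Module k L] [AddCommGroup R] [Module k R] (f : M →ₗ[k] L ⊗[k] R) (a : A) :
    (TensorProduct.leftComm k A L R).toLinearMap ∘ₗ LinearMap.lTensor A f
        ∘ₗ TensorProduct.mk k A M a
      = LinearMap.lTensor L (TensorProduct.mk k A R a) ∘ₗ f := by
  have h : (TensorProduct.leftComm k A L R).toLinearMap ∘ₗ TensorProduct.mk k A (L ⊗[k] R) a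
      = LinearMap.lTensor L (TensorProduct.mk k A R a) :=
    TensorProduct.ext' fun l r => by simp
  rw [← h]
  rfl

variable (k A) in
lemma splitTP_succ_of_zero_mem {n : ℕ} {S : Finset (Fin (n + 1))} (h : (0 : Fin (n + 1)) ∈ S) :
    splitTP k A (n + 1) S
      = (TensorProduct.congr (castTP k A (tailSet_card_mem S h))
            (castTP k A (card_compl_tailSet_of_zero_mem h))).toLinearMap
        ∘ₗ (TensorProduct.assoc k A (TP k A (tailSet S).card)
              (TP k A (tailSet S)ᶜ.card)).symm.toLinearMap
        ∘ₗ LinearMap.lTensor A (splitTP k A n (tailSet S)) :=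
  dif_pos h

variable (k A) in
lemma splitTP_succ_of_zero_notMem {n : ℕ} {S : Finset (Fin (n + 1))}
    (h : (0 : Fin (n + 1)) ∉ S) :
    splitTP k A (n + 1) S
      = (TensorProduct.congr (castTP k A (tailSet_card_not_mem S h))
            (castTP k A (card_compl_tailSet_of_zero_notMem h))).toLinearMap
        ∘ₗ (TensorProduct.leftComm k A (TP k A (tailSet S).card)
              (TP k A (tailSet S)ᶜ.card)).toLinearMap
        ∘ₗ LinearMap.lTensor A (splitTP k A n (tailSet S)) :=
  dif_neg h

lemma splitTP_comp_mkT_of_zero_mem {n : ℕ} {S : Finset (Fin (n + 1))}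
    (h : (0 : Fin (n + 1)) ∈ S) (a : A) :
    splitTP k A (n + 1) S ∘ₗ mkT k A n a
      = (TensorProduct.congr (castTP k A (tailSet_card_mem S h))
            (castTP k A (card_compl_tailSet_of_zero_mem h))).toLinearMap
        ∘ₗ LinearMap.rTensor (TP k A (tailSet S)ᶜ.card) (mkT k A (tailSet S).card a)
        ∘ₗ splitTP k A n (tailSet S) := by
  rw [splitTP_succ_of_zero_mem k A h]
  erw [LinearMap.comp_assoc, LinearMap.comp_assoc]

set_option maxHeartbeats 1000000 in
lemma splitTP_comp_mkT_of_zero_notMem {n : ℕ} {S : Finset (Fin (n + 1))}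
    (h : (0 : Fin (n + 1)) ∉ S) (a : A) :
    splitTP k A (n + 1) S ∘ₗ mkT k A n a
      = (TensorProduct.congr (castTP k A (tailSet_card_not_mem S h))
            (castTP k A (card_compl_tailSet_of_zero_notMem h))).toLinearMap
        ∘ₗ LinearMap.lTensor (TP k A (tailSet S).card) (mkT k A (tailSet S)ᶜ.card a)
        ∘ₗ splitTP k A n (tailSet S) := by
  rw [splitTP_succ_of_zero_notMem k A h]
  erw [LinearMap.comp_assoc, LinearMap.comp_assoc]
  congr 1
  exact leftComm_comp_lTensor_comp_mk (splitTP k A n (tailSet S)) a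

lemma congr_castTP_comp_rTensor_mkT {p' q' p q r s : ℕ} (e₁ : p' + 1 = r) (e₂ : q' = s)
    (hr : r = p + 1) (hs : s = q) (hp : p' = p) (hq : q' = q) (a : A) :
    (TensorProduct.congr (castTP k A hr) (castTP k A hs)).toLinearMap
        ∘ₗ (TensorProduct.congr (castTP k A e₁) (castTP k A e₂)).toLinearMap
        ∘ₗ LinearMap.rTensor (TP k A q') (mkT k A p' a)
      = TensorProduct.map (mkT k A p a) LinearMap.id
        ∘ₗ (TensorProduct.congr (castTP k A hp) (castTP k A hq)).toLinearMap := by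
  subst hp hq hr hs
  exact TensorProduct.ext' fun u v => rfl

lemma congr_castTP_comp_lTensor_mkT {p' q' p q r s : ℕ} (e₁ : p' = r) (e₂ : q' + 1 = s)
    (hr : r = p) (hs : s = q + 1) (hp : p' = p) (hq : q' = q) (a : A) :
    (TensorProduct.congr (castTP k A hr) (castTP k A hs)).toLinearMap
        ∘ₗ (TensorProduct.congr (castTP k A e₁) (castTP k A e₂)).toLinearMap
        ∘ₗ LinearMap.lTensor (TP k A p') (mkT k A q' a)
      = TensorProduct.map LinearMap.id (mkT k A q a)
        ∘ₗ (TensorProduct.congr (castTP k A hp) (castTP k A hq)).toLinearMap := by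
  subst hp hq hr hs
  exact TensorProduct.ext' fun u v => rfl

lemma cupTP_eq_sum (n p q : ℕ) (h : p + q = n) : cupTP k A n p q h = ∑ S, cupSummand k A h S :=
  rfl

lemma cupSummand_mkT_of_zero_mem {n p q : ℕ} (h : p + 1 + q = n + 1) (h' : p + q = n)
    (S : {S : Finset (Fin (n + 1)) // S.card = p + 1}) (h0 : (0 : Fin (n + 1)) ∈ S.1)
    (a : A) (x : TP k A n) :
    cupSummand k A h S (mkT k A n a x)
      = TensorProduct.map (mkT k A p a) LinearMap.id
          (cupSummand k A h' (zeroMemEquiv n p ⟨S, h0⟩) x) := by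
  have hsplit := LinearMap.congr_fun (splitTP_comp_mkT_of_zero_mem (k := k) h0 a) x
  have hcast := LinearMap.congr_fun (congr_castTP_comp_rTensor_mkT (tailSet_card_mem S.1 h0)
    (card_compl_tailSet_of_zero_mem h0) S.2 (card_compl_eq h S.1 S.2)
    (zeroMemEquiv n p ⟨S, h0⟩).2 (card_compl_eq h' _ (zeroMemEquiv n p ⟨S, h0⟩).2) a)
    (splitTP k A n (tailSet S.1) x)
  simp only [LinearMap.comp_apply] at hsplit hcast
  simp only [cupSummand, LinearMap.smul_apply, LinearMap.comp_apply, hsplit, hcast,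
    map_zsmul, shuffleSign_of_zero_mem h0]
  rfl

lemma cupSummand_mkT_of_zero_notMem {n p q : ℕ} (h : p + (q + 1) = n + 1) (h' : p + q = n)
    (S : {S : Finset (Fin (n + 1)) // S.card = p}) (h0 : (0 : Fin (n + 1)) ∉ S.1)
    (a : A) (x : TP k A n) :
    cupSummand k A h S (mkT k A n a x)
      = (-1 : ℤ) ^ p • TensorProduct.map LinearMap.id (mkT k A q a)
          (cupSummand k A h' (zeroNotMemEquiv n p ⟨S, h0⟩) x) := by
  have hsplit := LinearMap.congr_fun (splitTP_comp_mkT_of_zero_notMem (k := k) h0 a) x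
  have hcast := LinearMap.congr_fun (congr_castTP_comp_lTensor_mkT (tailSet_card_not_mem S.1 h0)
    (card_compl_tailSet_of_zero_notMem h0) S.2 (card_compl_eq h S.1 S.2)
    (zeroNotMemEquiv n p ⟨S, h0⟩).2 (card_compl_eq h' _ (zeroNotMemEquiv n p ⟨S, h0⟩).2) a)
    (splitTP k A n (tailSet S.1) x)
  simp only [LinearMap.comp_apply] at hsplit hcast
  simp only [cupSummand, LinearMap.smul_apply, LinearMap.comp_apply, hsplit, hcast,
    map_zsmul, shuffleSign_of_zero_notMem h0, S.2, mul_smul]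
  rfl

lemma sum_cupSummand_mkT_of_zero_mem {n p q : ℕ} (h : p + 1 + q = n + 1) (h' : p + q = n)
    (a : A) (x : TP k A n) :
    ∑ S : {S : {S : Finset (Fin (n + 1)) // S.card = p + 1} // (0 : Fin (n + 1)) ∈ S.1},
        cupSummand k A h S.1 (mkT k A n a x)
      = TensorProduct.map (mkT k A p a) LinearMap.id (cupTP k A n p q h' x) := by
  rw [cupTP_eq_sum, LinearMap.sum_apply, map_sum]
  exact Fintype.sum_equiv (zeroMemEquiv n p) _ _ fun S =>
    cupSummand_mkT_of_zero_mem h h' S.1 S.2 a x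

lemma sum_cupSummand_mkT_of_zero_notMem {n p q : ℕ} (h : p + (q + 1) = n + 1) (h' : p + q = n)
    (a : A) (x : TP k A n) :
    ∑ S : {S : {S : Finset (Fin (n + 1)) // S.card = p} // (0 : Fin (n + 1)) ∉ S.1},
        cupSummand k A h S.1 (mkT k A n a x)
      = (-1 : ℤ) ^ p • TensorProduct.map LinearMap.id (mkT k A q a) (cupTP k A n p q h' x) := by
  rw [cupTP_eq_sum, LinearMap.sum_apply, map_sum, Finset.smul_sum]
  exact Fintype.sum_equiv (zeroNotMemEquiv n p) _ _ fun S =>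
    cupSummand_mkT_of_zero_notMem h h' S.1 S.2 a x

lemma cupTP_apply_mkT {n p q : ℕ} (h : p + 1 + (q + 1) = n + 1) (h₁ : p + (q + 1) = n)
    (h₂ : p + 1 + q = n) (a : A) (x : TP k A n) :
    cupTP k A (n + 1) (p + 1) (q + 1) h (mkT k A n a x)
      = TensorProduct.map (mkT k A p a) LinearMap.id (cupTP k A n p (q + 1) h₁ x)
        + (-1 : ℤ) ^ (p + 1)
          • TensorProduct.map LinearMap.id (mkT k A q a) (cupTP k A n (p + 1) q h₂ x) := by
  rw [cupTP_eq_sum, LinearMap.sum_apply, ← Fintype.sum_subtype_add_sum_subtype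
      (fun S : {S : Finset (Fin (n + 1)) // S.card = p + 1} => (0 : Fin (n + 1)) ∈ S.1),
    sum_cupSummand_mkT_of_zero_mem h h₁, sum_cupSummand_mkT_of_zero_notMem h h₂]

lemma cupTP_zero_apply_mkT {n : ℕ} (h : 0 + (n + 1) = n + 1) (h' : 0 + n = n) (a : A)
    (x : TP k A n) :
    cupTP k A (n + 1) 0 (n + 1) h (mkT k A n a x)
      = TensorProduct.map LinearMap.id (mkT k A n a) (cupTP k A n 0 n h' x) := by
  have hempty : ∑ S : {S : {S : Finset (Fin (n + 1)) // S.card = 0} // (0 : Fin (n + 1)) ∈ S.1},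
      cupSummand k A h S.1 (mkT k A n a x) = 0 :=
    Fintype.sum_eq_zero _ fun S => absurd S.2 (by simp [Finset.card_eq_zero.mp S.1.2])
  rw [cupTP_eq_sum, LinearMap.sum_apply, ← Fintype.sum_subtype_add_sum_subtype
      (fun S : {S : Finset (Fin (n + 1)) // S.card = 0} => (0 : Fin (n + 1)) ∈ S.1),
    hempty, zero_add, sum_cupSummand_mkT_of_zero_notMem h h', pow_zero, one_smul]

lemma cupTP_apply_mkT_zero {n : ℕ} (h : n + 1 + 0 = n + 1) (h' : n + 0 = n) (a : A)
    (x : TP k A n) :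
    cupTP k A (n + 1) (n + 1) 0 h (mkT k A n a x)
      = TensorProduct.map (mkT k A n a) LinearMap.id (cupTP k A n n 0 h' x) := by
  have hempty :
      ∑ S : {S : {S : Finset (Fin (n + 1)) // S.card = n + 1} // (0 : Fin (n + 1)) ∉ S.1},
        cupSummand k A h S.1 (mkT k A n a x) = 0 :=
    Fintype.sum_eq_zero _ fun S =>
      absurd (Finset.eq_univ_of_card S.1.1 (by simp [S.1.2]) ▸ Finset.mem_univ _) S.2
  rw [cupTP_eq_sum, LinearMap.sum_apply, ← Fintype.sum_subtype_add_sum_subtype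
      (fun S : {S : Finset (Fin (n + 1)) // S.card = n + 1} => (0 : Fin (n + 1)) ∈ S.1),
    hempty, add_zero, sum_cupSummand_mkT_of_zero_mem h h']

end PrependFactor

section Bigraded

variable (A : Type) [Ring A] [Algebra k A]

/-- All bidegrees at once. The unshuffle coproduct `cupTotal n` below lives on the antidiagonal
`p + q = n` and vanishes elsewhere, which spares the case distinctions `p = 0`, `q = 0`. -/
abbrev BiTP : Type := (pq : ℕ × ℕ) → TP k A pq.1 ⊗[k] TP k A pq.2

variable {k A}

namespace BiTP

lemma hom_ext {M : Type} [AddCommGroup M] [Module k M] {F G : M →ₗ[k] BiTP k A}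
    (h : ∀ x p q, F x (p, q) = G x (p, q)) : F = G :=
  LinearMap.ext fun x => funext fun pq => h x pq.1 pq.2

def mapFst (f : ∀ m, TP k A m →ₗ[k] TP k A (m + 1)) : BiTP k A →ₗ[k] BiTP k A :=
  LinearMap.pi fun
    | (0, _) => 0
    | (p + 1, q) => TensorProduct.map (f p) LinearMap.id ∘ₗ LinearMap.proj (p, q)

def mapSnd (f : ∀ m, TP k A m →ₗ[k] TP k A (m + 1)) : BiTP k A →ₗ[k] BiTP k A :=
  LinearMap.pi fun
    | (_, 0) => 0
    | (p, q + 1) => (-1 : ℤ) ^ p • TensorProduct.map LinearMap.id (f q) ∘ₗ LinearMap.proj (p, q)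

/-- `f ⊗ 1 + 1 ⊗ f` on the tensor product, with the Koszul sign `(-1) ^ p` for `f` of degree one
passing a first factor of degree `p`. -/
def koszul (f : ∀ m, TP k A m →ₗ[k] TP k A (m + 1)) : BiTP k A →ₗ[k] BiTP k A :=
  mapFst f + mapSnd f

def mapFst₂ (f : ∀ m, TP k A m →ₗ[k] TP k A (m + 2)) : BiTP k A →ₗ[k] BiTP k A :=
  LinearMap.pi fun
    | (0, _) | (1, _) => 0
    | (p + 2, q) => TensorProduct.map (f p) LinearMap.id ∘ₗ LinearMap.proj (p, q)

def mapSnd₂ (f : ∀ m, TP k A m →ₗ[k] TP k A (m + 2)) : BiTP k A →ₗ[k] BiTP k A :=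
  LinearMap.pi fun
    | (_, 0) | (_, 1) => 0
    | (p, q + 2) => TensorProduct.map LinearMap.id (f q) ∘ₗ LinearMap.proj (p, q)

/-- The analogue of `koszul` in degree two, where no sign occurs. -/
def koszul₂ (f : ∀ m, TP k A m →ₗ[k] TP k A (m + 2)) : BiTP k A →ₗ[k] BiTP k A :=
  mapFst₂ f + mapSnd₂ f

def cross (φ : ∀ p q, TP k A p ⊗[k] TP k A q →ₗ[k] TP k A (p + 1) ⊗[k] TP k A (q + 1)) :
    BiTP k A →ₗ[k] BiTP k A :=
  LinearMap.pi fun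
    | (0, _) | (_, 0) => 0
    | (p + 1, q + 1) => (-1 : ℤ) ^ p • φ p q ∘ₗ LinearMap.proj (p, q)

section
variable (f : ∀ m, TP k A m →ₗ[k] TP k A (m + 1)) (y : BiTP k A) (p q : ℕ)

@[simp] lemma mapFst_zero : mapFst f y (0, q) = 0 := rfl
@[simp] lemma mapFst_succ :
    mapFst f y (p + 1, q) = TensorProduct.map (f p) LinearMap.id (y (p, q)) := rfl
@[simp] lemma mapSnd_zero : mapSnd f y (p, 0) = 0 := rfl
@[simp] lemma mapSnd_succ :
    mapSnd f y (p, q + 1) = (-1 : ℤ) ^ p • TensorProduct.map LinearMap.id (f q) (y (p, q)) := rfl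

end

section
variable (f : ∀ m, TP k A m →ₗ[k] TP k A (m + 2)) (y : BiTP k A) (p q : ℕ)

@[simp] lemma mapFst₂_zero : mapFst₂ f y (0, q) = 0 := rfl
@[simp] lemma mapFst₂_one : mapFst₂ f y (1, q) = 0 := rfl
@[simp] lemma mapFst₂_add_two :
    mapFst₂ f y (p + 2, q) = TensorProduct.map (f p) LinearMap.id (y (p, q)) := rfl
@[simp] lemma mapSnd₂_zero : mapSnd₂ f y (p, 0) = 0 := rfl
@[simp] lemma mapSnd₂_one : mapSnd₂ f y (p, 1) = 0 := rfl
@[simp] lemma mapSnd₂_add_two :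
    mapSnd₂ f y (p, q + 2) = TensorProduct.map LinearMap.id (f q) (y (p, q)) := rfl

end

section
variable (φ : ∀ p q, TP k A p ⊗[k] TP k A q →ₗ[k] TP k A (p + 1) ⊗[k] TP k A (q + 1))
  (y : BiTP k A) (p q : ℕ)

@[simp] lemma cross_zero_left : cross φ y (0, q) = 0 := rfl
@[simp] lemma cross_zero_right : cross φ y (p, 0) = 0 := by cases p <;> rfl
@[simp] lemma cross_succ_succ :
    cross φ y (p + 1, q + 1) = (-1 : ℤ) ^ p • φ p q (y (p, q)) := rfl

end

lemma koszul₂_add (f g : ∀ m, TP k A m →ₗ[k] TP k A (m + 2)) :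
    koszul₂ (fun m => f m + g m) = koszul₂ f + koszul₂ g := by
  refine hom_ext fun y p q => ?_
  rcases p with _ | _ | p <;> rcases q with _ | _ | q <;>
    simp [koszul₂, TensorProduct.map_add_left, TensorProduct.map_add_right, add_add_add_comm]

lemma koszul₂_zero : koszul₂ (0 : ∀ m, TP k A m →ₗ[k] TP k A (m + 2)) = 0 := by
  refine hom_ext fun y p q => ?_
  rcases p with _ | _ | p <;> rcases q with _ | _ | q <;> simp [koszul₂]

lemma cross_add (φ ψ : ∀ p q, TP k A p ⊗[k] TP k A q →ₗ[k] TP k A (p + 1) ⊗[k] TP k A (q + 1)) :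
    cross (fun p q => φ p q + ψ p q) = cross φ + cross ψ := by
  refine hom_ext fun y p q => ?_
  rcases p with _ | p <;> rcases q with _ | q <;> simp [smul_add]

lemma koszul_comp_koszul (f g : ∀ m, TP k A m →ₗ[k] TP k A (m + 1)) :
    koszul f ∘ₗ koszul g
      = koszul₂ (fun m => f (m + 1) ∘ₗ g m) + cross (fun p q => TensorProduct.map (f p) (g q))
        - cross (fun p q => TensorProduct.map (g p) (f q)) := by
  refine hom_ext fun y p q => ?_
  rcases p with _ | _ | p <;> rcases q with _ | _ | q <;>
    simp [koszul, koszul₂, TensorProduct.map_map, pow_succ, smul_smul, ← mul_pow] <;> abel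

lemma koszul_comp_add_comp (f g : ∀ m, TP k A m →ₗ[k] TP k A (m + 1)) :
    koszul f ∘ₗ koszul g + koszul g ∘ₗ koszul f
      = koszul₂ (fun m => f (m + 1) ∘ₗ g m + g (m + 1) ∘ₗ f m) := by
  rw [koszul_comp_koszul, koszul_comp_koszul, koszul₂_add]
  abel

end BiTP

open BiTP

variable (k A) in
def cupTotal (n : ℕ) : TP k A n →ₗ[k] BiTP k A :=
  LinearMap.pi fun pq => if h : pq.1 + pq.2 = n then cupTP k A n pq.1 pq.2 h else 0

lemma cupTotal_apply (n p q : ℕ) (x : TP k A n) :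
    cupTotal k A n x (p, q) = if h : p + q = n then cupTP k A n p q h x else 0 := by
  by_cases h : p + q = n <;> simp [cupTotal, h]

lemma koszul_comp_cupTotal_zero (f : ∀ m, TP k A m →ₗ[k] TP k A (m + 1)) (hf : f 0 = 0) :
    koszul f ∘ₗ cupTotal k A 0 = 0 := by
  refine hom_ext fun x p q => ?_
  rcases p with _ | _ | p <;> rcases q with _ | _ | q <;> simp [koszul, cupTotal_apply, hf]

lemma cupTotal_comp_mkT (n : ℕ) (a : A) :
    cupTotal k A (n + 1) ∘ₗ mkT k A n a = koszul (fun m => mkT k A m a) ∘ₗ cupTotal k A n := by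
  refine hom_ext fun x p q => ?_
  rcases p with _ | p <;> rcases q with _ | q
  · simp [cupTotal_apply, koszul]
  · by_cases hq : q = n
    · subst hq
      simp [cupTotal_apply, koszul, cupTP_zero_apply_mkT]
    · simp [cupTotal_apply, koszul, hq]
  · by_cases hp : p = n
    · subst hp
      simp [cupTotal_apply, koszul, cupTP_apply_mkT_zero]
    · simp [cupTotal_apply, koszul, hp]
  · simp only [LinearMap.comp_apply, koszul, LinearMap.add_apply, Pi.add_apply, mapFst_succ,
      mapSnd_succ, cupTotal_apply]
    by_cases h : p + q + 1 = n
    · rw [dif_pos (by omega), dif_pos (by omega), dif_pos (by omega), cupTP_apply_mkT]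
    · rw [dif_neg (by omega), dif_neg (by omega), dif_neg (by omega), map_zero, map_zero,
        smul_zero, add_zero]

variable (k A) in
def mkT₂ (n : ℕ) : A ⊗[k] A →ₗ[k] TP k A n →ₗ[k] TP k A (n + 2) :=
  (TensorProduct.mk k (A ⊗[k] A) (TP k A n)).compr₂
    (TensorProduct.assoc k A A (TP k A n)).toLinearMap

lemma mkT₂_tmul (n : ℕ) (u v : A) :
    mkT₂ k A n (u ⊗ₜ v) = mkT k A (n + 1) u ∘ₗ mkT k A n v :=
  LinearMap.ext fun x => TensorProduct.assoc_tmul u v x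

variable (k A) in
def mkPair (p q : ℕ) :
    A ⊗[k] A →ₗ[k] TP k A p ⊗[k] TP k A q →ₗ[k] TP k A (p + 1) ⊗[k] TP k A (q + 1) :=
  TensorProduct.homTensorHomMap (RingHom.id k) (TP k A p) (TP k A q) (TP k A (p + 1))
      (TP k A (q + 1))
    ∘ₗ TensorProduct.map (TensorProduct.mk k A (TP k A p)) (TensorProduct.mk k A (TP k A q))

lemma mkPair_tmul (p q : ℕ) (u v : A) :
    mkPair k A p q (u ⊗ₜ v) = TensorProduct.map (mkT k A p u) (mkT k A q v) := by
  ext x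
  simp only [mkPair, mkT, LinearMap.comp_apply]
  rfl

lemma cupTotal_comp_mkT₂ (n : ℕ) (t : A ⊗[k] A) :
    cupTotal k A (n + 2) ∘ₗ mkT₂ k A n t
      = (koszul₂ (fun m => mkT₂ k A m t) + cross (fun p q => mkPair k A p q t)
          - cross (fun p q => mkPair k A p q (TensorProduct.comm k A A t))) ∘ₗ cupTotal k A n := by
  induction t using TensorProduct.induction_on with
  | zero => simp [← Pi.zero_def, koszul₂_zero]
  | tmul u v =>
    rw [mkT₂_tmul, ← LinearMap.comp_assoc, cupTotal_comp_mkT, LinearMap.comp_assoc,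
      cupTotal_comp_mkT, ← LinearMap.comp_assoc, koszul_comp_koszul]
    simp only [mkT₂_tmul, mkPair_tmul, TensorProduct.comm_tmul]
  | add t t' ht ht' =>
    rw [map_add, LinearMap.comp_add, ht, ht']
    simp only [map_add, koszul₂_add, cross_add, LinearMap.add_comp, LinearMap.sub_comp]
    abel

end Bigraded

section HochschildDiff

variable (A : Type) [Ring A] [Algebra k A]

open BiTP

-- `bCM k H` is `hochschildDiff k H Coalgebra.comul` by definition.
def hochschildDiff (Δ : A →ₗ[k] A ⊗[k] A) (n : ℕ) : TP k A n →ₗ[k] TP k A (n + 1) :=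
  cons1 k A n + ∑ i : Fin n, ((-1 : ℤ) ^ (i.val + 1)) • comulAt k A Δ n i
    + ((-1 : ℤ) ^ (n + 1)) • snoc1 k A n

variable {k A}

lemma hochschildDiff_zero (Δ : A →ₗ[k] A ⊗[k] A) : hochschildDiff k A Δ 0 = 0 := by
  have h : snoc1 k A 0 = cons1 k A 0 := LinearMap.ext_ring rfl
  simp [hochschildDiff, h]

lemma cons1_apply (n : ℕ) (x : TP k A n) : cons1 k A n x = mkT k A n 1 x :=
  rfl

lemma comulAt_zero_mkT (Δ : A →ₗ[k] A ⊗[k] A) (n : ℕ) (a : A) (x : TP k A n) :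
    comulAt k A Δ (n + 1) 0 (mkT k A n a x) = mkT₂ k A n (Δ a) x := by
  cases n <;> rfl

lemma comulAt_succ_mkT (Δ : A →ₗ[k] A ⊗[k] A) (n : ℕ) (i : Fin n) (a : A) (x : TP k A n) :
    comulAt k A Δ (n + 1) i.succ (mkT k A n a x) = mkT k A (n + 1) a (comulAt k A Δ n i x) := by
  cases n with
  | zero => exact i.elim0
  | succ m => rfl

lemma snoc1_mkT (n : ℕ) (a : A) (x : TP k A n) :
    snoc1 k A (n + 1) (mkT k A n a x) = mkT k A (n + 1) a (snoc1 k A n x) :=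
  rfl

lemma hochschildDiff_comp_mkT (Δ : A →ₗ[k] A ⊗[k] A) (n : ℕ) (a : A) :
    hochschildDiff k A Δ (n + 1) ∘ₗ mkT k A n a
      = mkT₂ k A n (1 ⊗ₜ a + a ⊗ₜ 1 - Δ a) - mkT k A (n + 1) a ∘ₗ hochschildDiff k A Δ n := by
  ext x
  simp only [hochschildDiff, LinearMap.comp_apply, LinearMap.add_apply, LinearMap.sub_apply,
    LinearMap.sum_apply, LinearMap.smul_apply]
  rw [Fin.sum_univ_succ]
  simp only [comulAt_zero_mkT, comulAt_succ_mkT, snoc1_mkT, cons1_apply, map_add, map_sub,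
    map_sum, map_zsmul, mkT₂_tmul, LinearMap.add_apply, LinearMap.sub_apply, LinearMap.comp_apply,
    Fin.val_zero, Fin.val_succ]
  simp only [pow_succ _ (_ + 1), mul_neg_one, neg_smul, Finset.sum_neg_distrib]
  abel

theorem cupTotal_comp_hochschildDiff (Δ : A →ₗ[k] A ⊗[k] A)
    (hΔ : ∀ a, TensorProduct.comm k A A (Δ a) = Δ a) (n : ℕ) :
    cupTotal k A (n + 1) ∘ₗ hochschildDiff k A Δ n
      = koszul (hochschildDiff k A Δ) ∘ₗ cupTotal k A n := by
  induction n with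
  | zero =>
    rw [hochschildDiff_zero, LinearMap.comp_zero,
      koszul_comp_cupTotal_zero _ (hochschildDiff_zero Δ)]
  | succ n ih =>
    refine TP.hom_ext_mkT fun a => ?_
    set δ : A ⊗[k] A := 1 ⊗ₜ a + a ⊗ₜ 1 - Δ a
    have hδ : TensorProduct.comm k A A δ = δ := by simp [δ, hΔ, add_comm]
    have hanti : (fun m => hochschildDiff k A Δ (m + 1) ∘ₗ mkT k A m a
        + mkT k A (m + 1) a ∘ₗ hochschildDiff k A Δ m) = fun m => mkT₂ k A m δ :=
      funext fun m => by rw [hochschildDiff_comp_mkT]; abel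
    calc (cupTotal k A (n + 2) ∘ₗ hochschildDiff k A Δ (n + 1)) ∘ₗ mkT k A n a
        = cupTotal k A (n + 2) ∘ₗ mkT₂ k A n δ
          - (cupTotal k A (n + 2) ∘ₗ mkT k A (n + 1) a) ∘ₗ hochschildDiff k A Δ n := by
          rw [LinearMap.comp_assoc, hochschildDiff_comp_mkT, LinearMap.comp_sub,
            LinearMap.comp_assoc]
      -- cocommutativity enters here: the mixed terms of `δ` and of its flip cancel
      _ = (koszul₂ (fun m => mkT₂ k A m δ)
          - koszul (fun m => mkT k A m a) ∘ₗ koszul (hochschildDiff k A Δ)) ∘ₗ cupTotal k A n := by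
          rw [cupTotal_comp_mkT₂, hδ, add_sub_cancel_right, cupTotal_comp_mkT,
            LinearMap.comp_assoc, ih, LinearMap.sub_comp, LinearMap.comp_assoc]
      _ = (koszul (hochschildDiff k A Δ) ∘ₗ koszul (fun m => mkT k A m a)) ∘ₗ cupTotal k A n := by
          rw [← hanti, ← koszul_comp_add_comp, add_sub_cancel_right]
      _ = (koszul (hochschildDiff k A Δ) ∘ₗ cupTotal k A (n + 1)) ∘ₗ mkT k A n a := by
          rw [LinearMap.comp_assoc, LinearMap.comp_assoc, cupTotal_comp_mkT]

end HochschildDiff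

end HopfCyclicStmt



open HopfCyclicStmt

variable (k : Type) [Field k] [CharZero k]
variable (H : Type) [Ring H] [HopfAlgebra k H]

/-- The Hochschild differential `b = Σ_{i=0}^{n+1} (−1)^i dᵢ : H^{⊗n} → H^{⊗(n+1)}` of
the Connes–Moscovici complex with trivial coefficients: `d₀ = 1 ⊗ −`,
`dᵢ = Δ` applied to the `i`-th factor (`1 ≤ i ≤ n`), `d_{n+1} = − ⊗ 1`. -/
def bCM (n : ℕ) : TP k H n →ₗ[k] TP k H (n + 1) :=
  cons1 k H n
    + ∑ i : Fin n, ((-1 : ℤ) ^ (i.val + 1)) • comulAt k H (Coalgebra.comul) n i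
    + ((-1 : ℤ) ^ (n + 1)) • snoc1 k H n

/-- For a cocommutative Hopf algebra `H`, the unshuffle coproduct is a
morphism of cochain complexes from `(H^{⊗•}, b)` to the total tensor product complex,
and consequently it maps cocycles to cocycles, inducing the coproduct `⊔` on the
Hochschild cohomology of the Connes–Moscovici complex. -/
theorem cup_chain_map
    (hcocomm : ∀ h : H, TensorProduct.comm k H H (Coalgebra.comul h) = Coalgebra.comul h) :
    -- interior components: `∪_{p+1,q+1} ∘ b = (b⊗id) ∘ ∪_{p,q+1} + (−1)^{p+1} (id⊗b) ∘ ∪_{p+1,q}`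
    (∀ (n p q : ℕ) (h : p + 1 + (q + 1) = n + 1) (h₁ : p + (q + 1) = n)
        (h₂ : p + 1 + q = n),
      cupTP k H (n + 1) (p + 1) (q + 1) h ∘ₗ bCM k H n
        = TensorProduct.map (bCM k H p) LinearMap.id ∘ₗ cupTP k H n p (q + 1) h₁
          + ((-1 : ℤ) ^ (p + 1)) •
              (TensorProduct.map LinearMap.id (bCM k H q) ∘ₗ cupTP k H n (p + 1) q h₂))
    -- boundary component `p = 0`
    ∧ (∀ (n : ℕ),
      cupTP k H (n + 1) 0 (n + 1) (by omega) ∘ₗ bCM k H n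
        = TensorProduct.map LinearMap.id (bCM k H n) ∘ₗ cupTP k H n 0 n (by omega))
    -- boundary component `q = 0`
    ∧ (∀ (n : ℕ),
      cupTP k H (n + 1) (n + 1) 0 (by omega) ∘ₗ bCM k H n
        = TensorProduct.map (bCM k H n) LinearMap.id ∘ₗ cupTP k H n n 0 (by omega))
    -- consequently, cocycles are sent to cocycles of the total tensor product complex,
    -- so `∪` induces the coproduct `⊔ : HHⁿ(H) → ⊕_{p+q=n} HH^p(H) ⊗ HH^q(H)`
    ∧ (∀ (n p q : ℕ) (h₁ : p + (q + 1) = n) (h₂ : p + 1 + q = n) (x : TP k H n),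
      bCM k H n x = 0 →
      TensorProduct.map (bCM k H p) LinearMap.id (cupTP k H n p (q + 1) h₁ x)
          + ((-1 : ℤ) ^ (p + 1)) •
              TensorProduct.map LinearMap.id (bCM k H q) (cupTP k H n (p + 1) q h₂ x) = 0)
    := by
  have hmain (n : ℕ) :
      cupTotal k H (n + 1) ∘ₗ bCM k H n = BiTP.koszul (bCM k H) ∘ₗ cupTotal k H n :=
    cupTotal_comp_hochschildDiff _ hcocomm n
  have hcomp (n : ℕ) (x : TP k H n) (p q : ℕ) :
      cupTotal k H (n + 1) (bCM k H n x) (p, q)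
        = BiTP.koszul (bCM k H) (cupTotal k H n x) (p, q) :=
    congrFun (LinearMap.congr_fun (hmain n) x) (p, q)
  refine ⟨fun n p q h h₁ h₂ => LinearMap.ext fun x => ?_, fun n => LinearMap.ext fun x => ?_,
    fun n => LinearMap.ext fun x => ?_, fun n p q h₁ h₂ x hx => ?_⟩
  · simpa [cupTotal_apply, h, h₁, h₂, BiTP.koszul] using hcomp n x (p + 1) (q + 1)
  · simpa [cupTotal_apply, BiTP.koszul] using hcomp n x 0 (n + 1)
  · simpa [cupTotal_apply, BiTP.koszul] using hcomp n x (n + 1) 0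
  · simpa [cupTotal_apply, h₁, h₂, BiTP.koszul, hx] using (hcomp n x (p + 1) (q + 1)).symm

end
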